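/- Let Q ⊆ Z2[X] be a set of binomials, i.e. every element of Q is the sum of two distinct monomials. If α and α′ are monomials with α + α′ ∈ ⟨Q⟩, then there exist monomials α_0, …, α_r with α_0 = α, α_r = α′, and for every i ∈ {0, …, r−1} there exist a monomial β_i and a polynomial p_i ∈ Q such that α_i + α_{i+1} = β_i·p_i. -/

import Mathlib

open MvPolynomial

/-- Monomials in the variables `σ`, represented by their exponent vectors. -/
abbrev Mon (σ : Type*) := σ →₀ ℕ

/-- A monomial order: a total order on monomials such that `1 ≼ t` for every monomial `t`
and `t ≼ u → t·v ≼ u·v` (written additively on exponent vectors). -/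
structure MonOrd (σ : Type*) where
  le : Mon σ → Mon σ → Prop
  le_refl : ∀ t, le t t
  le_trans : ∀ t u v, le t u → le u v → le t v
  le_antisymm : ∀ t u, le t u → le u t → t = u
  le_total : ∀ t u, le t u ∨ le u t
  zero_le : ∀ t, le 0 t
  add_le_add : ∀ t u v, le t u → le (t + v) (u + v)

/-- Strict version of a monomial order. -/
def MonOrd.lt {σ : Type*} (μ : MonOrd σ) (t u : Mon σ) : Prop := μ.le t u ∧ t ≠ u

/-- The extension of a monomial order (given by the relation `r` on monomials) to polynomials:
`g ≼ f` iff `g = f` or the greatest monomial on which `f` and `g` differ occurs in `f`.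
(This is the closed form of the recursive definition: `g ≼ f` iff `g = f`, or
`HT g ≺ HT f`, or `HT g = HT f` and `g - HT g ≼ f - HT f`, with `0` the least polynomial.) -/
def polyLe {σ : Type*} (r : Mon σ → Mon σ → Prop) (g f : MvPolynomial σ (ZMod 2)) : Prop :=
  g = f ∨ ∃ t, t ∈ f.support ∧ t ∉ g.support ∧
    ∀ u : Mon σ, ((u ∈ f.support ∧ u ∉ g.support) ∨ (u ∈ g.support ∧ u ∉ f.support)) → r u t

/-- Strict extension of a monomial order to polynomials. -/
def polyLt {σ : Type*} (r : Mon σ → Mon σ → Prop) (g f : MvPolynomial σ (ZMod 2)) : Prop :=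
  polyLe r g f ∧ g ≠ f

/-- `S_F`: the set of non-residual polynomials with respect to `F` and the monomial order `r`,
i.e. those `f` admitting a `g` with `f + g ∈ ⟨F⟩` and `g ≺ f`. -/
def SF {σ : Type*} (r : Mon σ → Mon σ → Prop) (F : Set (MvPolynomial σ (ZMod 2))) :
    Set (MvPolynomial σ (ZMod 2)) :=
  {f | ∃ g, f + g ∈ Ideal.span F ∧ polyLt r g f}

/-- `t` is the head monomial (`r`-greatest monomial) of the polynomial `f`. -/
def IsHT {σ : Type*} (r : Mon σ → Mon σ → Prop) (f : MvPolynomial σ (ZMod 2)) (t : Mon σ) :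
    Prop :=
  t ∈ f.support ∧ ∀ u ∈ f.support, r u t

/-- `HT(S)`: the set of head monomials (as polynomials) of the nonzero elements of `S`. -/
def HTset {σ : Type*} (r : Mon σ → Mon σ → Prop) (S : Set (MvPolynomial σ (ZMod 2))) :
    Set (MvPolynomial σ (ZMod 2)) :=
  {p | ∃ f ∈ S, f ≠ 0 ∧ ∃ t, IsHT r f t ∧ p = monomial t 1}

/-- The divisibility (componentwise) order `◁` on monomials. -/
def triMon {σ : Type*} (t u : Mon σ) : Prop := ∀ x, t x ≤ u x

/-- The order `◁` on polynomials: `p ◁ q` iff there is an injective map `φ` from the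
monomials of `p` to the monomials of `q` with `t ◁ φ t` for each monomial `t` of `p`. -/
def triPoly {σ : Type*} (p q : MvPolynomial σ (ZMod 2)) : Prop :=
  ∃ φ : Mon σ → Mon σ, Set.InjOn φ ↑p.support ∧ ∀ t ∈ p.support, φ t ∈ q.support ∧ triMon t (φ t)

/-- Upward closure with respect to `◁`. -/
def upClo {σ : Type*} (A : Set (MvPolynomial σ (ZMod 2))) : Set (MvPolynomial σ (ZMod 2)) :=
  {q | ∃ p ∈ A, triPoly p q}

/-- `Min_◁(A)`: the `◁`-minimal elements of `A`. -/
def minTri {σ : Type*} (A : Set (MvPolynomial σ (ZMod 2))) : Set (MvPolynomial σ (ZMod 2)) :=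
  {p | p ∈ A ∧ ∀ q ∈ A, triPoly q p → q = p}

/-- `G` is a Gröbner basis of the ideal `I` with respect to the monomial order `r`. -/
def IsGB {σ : Type*} (r : Mon σ → Mon σ → Prop) (G : Finset (MvPolynomial σ (ZMod 2)))
    (I : Ideal (MvPolynomial σ (ZMod 2))) : Prop :=
  (↑G : Set (MvPolynomial σ (ZMod 2))) ⊆ ↑I ∧
    Ideal.span (↑G : Set (MvPolynomial σ (ZMod 2))) = I ∧
    Ideal.span (HTset r (↑I : Set (MvPolynomial σ (ZMod 2)))) = Ideal.span (HTset r ↑G)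

/-- `G` is a reduced Gröbner basis of `I` with respect to `r`. -/
def IsReducedGB {σ : Type*} (r : Mon σ → Mon σ → Prop) (G : Finset (MvPolynomial σ (ZMod 2)))
    (I : Ideal (MvPolynomial σ (ZMod 2))) : Prop :=
  IsGB r G I ∧ ∀ f ∈ G, ¬ ∀ t ∈ f.support,
    (monomial t 1 : MvPolynomial σ (ZMod 2)) ∈
      Ideal.span (HTset r ((↑G : Set (MvPolynomial σ (ZMod 2))) \ {f}))

/-- The variable set `X`: the special variables `s, ℓ, c, c̄, b, b̄` together with, for each
`0 ≤ i ≤ n`, the variables `s_i, f_i, q_{ji}, c_{ji}, b_{ji}` (`1 ≤ j ≤ 4`, encoded by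
`j : Fin 4`) and their barred copies (`bar = true`). -/
inductive MVar (n : ℕ) : Type where
  | vs | vl | vc | vcb | vb | vbb
  | vS (bar : Bool) (i : Fin (n+1))
  | vF (bar : Bool) (i : Fin (n+1))
  | vQ (bar : Bool) (j : Fin 4) (i : Fin (n+1))
  | vC (bar : Bool) (j : Fin 4) (i : Fin (n+1))
  | vB (bar : Bool) (j : Fin 4) (i : Fin (n+1))
deriving DecidableEq

open MVar

abbrev MPoly (n : ℕ) := MvPolynomial (MVar n) (ZMod 2)

/-- `e(n) = 2^(2^n)`. -/
def en (n : ℕ) : ℕ := 2 ^ 2 ^ n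

/-- The set `P_0` (barred copy if `bar = true`). -/
def P0 (n : ℕ) (bar : Bool) : Set (MPoly n) :=
  {p | ∃ j : Fin 4, p =
    X (vB bar j 0) ^ 2 * X (vC bar j 0) * X (vF bar 0) + X (vC bar j 0) * X (vS bar 0)}

/-- The set `P_m` for `m = i+1`, `i : Fin n` (barred copy if `bar = true`).
Here `i.succ` plays the role of `m` and `i.castSucc` the role of `m-1`; the indices
`1,2,3,4` of the paper are encoded as `0,1,2,3 : Fin 4`. -/
def Pm (n : ℕ) (bar : Bool) (i : Fin n) : Set (MPoly n) :=
  ({ X (vQ bar 0 i.succ) * X (vC bar 0 i.castSucc) * X (vS bar i.castSucc) + X (vS bar i.succ),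
    X (vQ bar 1 i.succ) * X (vC bar 1 i.castSucc) * X (vS bar i.castSucc)
      + X (vQ bar 0 i.succ) * X (vB bar 0 i.castSucc) * X (vC bar 0 i.castSucc)
        * X (vF bar i.castSucc),
    X (vQ bar 2 i.succ) * X (vC bar 2 i.castSucc) * X (vF bar i.castSucc)
      + X (vQ bar 1 i.succ) * X (vC bar 1 i.castSucc) * X (vF bar i.castSucc),
    X (vQ bar 2 i.succ) * X (vB bar 0 i.castSucc) * X (vC bar 2 i.castSucc)
        * X (vS bar i.castSucc)
      + X (vQ bar 1 i.succ) * X (vB bar 3 i.castSucc) * X (vC bar 1 i.castSucc)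
        * X (vS bar i.castSucc),
    X (vQ bar 3 i.succ) * X (vB bar 3 i.castSucc) * X (vC bar 3 i.castSucc)
        * X (vF bar i.castSucc)
      + X (vQ bar 2 i.succ) * X (vC bar 2 i.castSucc) * X (vS bar i.castSucc),
    X (vQ bar 3 i.succ) * X (vC bar 3 i.castSucc) * X (vS bar i.castSucc)
      + X (vF bar i.succ) } : Set (MPoly n))
  ∪ {p | ∃ j : Fin 4, p =
      X (vQ bar 1 i.succ) * X (vB bar 2 i.castSucc) * X (vB bar j i.succ) * X (vC bar j i.succ)
          * X (vF bar i.castSucc)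
        + X (vQ bar 1 i.succ) * X (vB bar 1 i.castSucc) * X (vC bar j i.succ)
          * X (vF bar i.castSucc)}

/-- The set `P = P_0 ∪ P_1 ∪ ⋯ ∪ P_n`; for `bar = true` this is the barred copy `P̄`
(the image of `P` under the substitution replacing each variable by its barred version). -/
def PP (n : ℕ) (bar : Bool) : Set (MPoly n) := P0 n bar ∪ ⋃ i : Fin n, Pm n bar i

/-- The set `G` of seven extra binomials. -/
def GG (n : ℕ) : Set (MPoly n) :=
  { X (vB false 3 (Fin.last n)) * X vl * X vb + X vl * X vc,
    X (vB false 3 (Fin.last n)) * X vl * X vbb + X vl * X vcb,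
    X (vC false 3 (Fin.last n)) * X (vF false (Fin.last n)) + X vl,
    X (vC true 3 (Fin.last n)) * X (vF true (Fin.last n))
      + X (vC false 3 (Fin.last n)) * X (vS false (Fin.last n)),
    X (vB true 3 (Fin.last n)) * X (vC false 3 (Fin.last n)) * X (vS false (Fin.last n))
      + X (vC false 3 (Fin.last n)) * X (vS false (Fin.last n)) * X vb,
    X (vB true 3 (Fin.last n)) * X (vC false 3 (Fin.last n)) * X (vS false (Fin.last n))
      + X (vC false 3 (Fin.last n)) * X (vS false (Fin.last n)) * X vbb,
    X (vC true 3 (Fin.last n)) * X (vS true (Fin.last n)) + X vs }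

/-- The set `𝓕 = P ∪ P̄ ∪ G`. -/
def FF (n : ℕ) : Set (MPoly n) := PP n false ∪ PP n true ∪ GG n

/-- The set `C = {ℓ c̄^{m1} c^{m2} : m1 + m2 = e(n)}` of monomials. -/
def Cmon (n : ℕ) : Set (Mon (MVar n)) :=
  {α | ∃ m1 m2 : ℕ, m1 + m2 = en n ∧
    α = Finsupp.single vl 1 + Finsupp.single vcb m1 + Finsupp.single vc m2}

/-- The set `D = {ℓ^j c̄^{m1} c^{m2} : j ∈ {0,1}, j + m1 + m2 ≤ e(n)}` of monomials. -/
def Dmon (n : ℕ) : Set (Mon (MVar n)) :=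
  {α | ∃ j m1 m2 : ℕ, j ≤ 1 ∧ j + m1 + m2 ≤ en n ∧
    α = Finsupp.single vl j + Finsupp.single vcb m1 + Finsupp.single vc m2}

/-- An injective rank function on the variables realizing the variable ordering
(from least to greatest): `s, c, c̄, ℓ, b, b̄`; then `s_0,…,s_n`; `f_0,…,f_n`;
`c_{10},…,c_{1n}; …; c_{40},…,c_{4n}`; `b_{10},…,b_{4n}`; `q_{10},…,q_{4n}`;
then the barred variables in the same pattern. -/
def vrank (n : ℕ) : MVar n → ℕ
  | .vs => 0
  | .vc => 1
  | .vcb => 2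
  | .vl => 3
  | .vb => 4
  | .vbb => 5
  | .vS bar i => 6 + (cond bar (14 * (n+1)) 0) + (i : ℕ)
  | .vF bar i => 6 + (cond bar (14 * (n+1)) 0) + (n+1) + (i : ℕ)
  | .vC bar j i => 6 + (cond bar (14 * (n+1)) 0) + 2*(n+1) + (j : ℕ)*(n+1) + (i : ℕ)
  | .vB bar j i => 6 + (cond bar (14 * (n+1)) 0) + 6*(n+1) + (j : ℕ)*(n+1) + (i : ℕ)
  | .vQ bar j i => 6 + (cond bar (14 * (n+1)) 0) + 10*(n+1) + (j : ℕ)*(n+1) + (i : ℕ)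

/-- The lexicographic monomial order on `X`: `t ≼_lex u` iff `t = u` or the exponents differ
somewhere and at the greatest variable (w.r.t. `vrank`) where they differ, the exponent of
`t` is smaller. -/
def lexLe (n : ℕ) (t u : Mon (MVar n)) : Prop :=
  t = u ∨ ∃ x : MVar n, t x < u x ∧ ∀ y : MVar n, vrank n x < vrank n y → t y = u y

/-- The total degree of a monomial. -/
def mdeg {σ : Type*} (t : Mon σ) : ℕ := t.sum fun _ k => k

/-- The degree lexicographic monomial order. -/
def degLexLe (n : ℕ) (t u : Mon (MVar n)) : Prop :=
  mdeg t < mdeg u ∨ (mdeg t = mdeg u ∧ lexLe n t u)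

/-- Weighted degree of a monomial with respect to a weight map `w`. -/
noncomputable def wdeg {n : ℕ} (w : MVar n → ℝ) (t : Mon (MVar n)) : ℝ :=
  t.sum fun x k => (k : ℝ) * w x

/-- The weighted monomial order determined by the weight map `w`. -/
def wLe {n : ℕ} (w : MVar n → ℝ) (t u : Mon (MVar n)) : Prop := t = u ∨ wdeg w t < wdeg w u

/-!
Call two monomials adjacent when their sum is `β·p` for a monomial `β` and some `p ∈ Q`.
Adjacency is preserved by multiplying both monomials by a monomial, so the equivalence relation
it generates is a congruence on the monoid of monomials. Collapsing every monomial to its class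
is then a ring homomorphism from `Z₂[X]` to the monoid algebra of the quotient monoid. A binomial
`t + u ∈ Q` maps to `[t] + [u] = 2·[t] = 0`, so `⟨Q⟩` lies in the kernel, while `α + α'` maps to
`[α] + [α']`, which vanishes only if `[α] = [α']`, i.e. if `α` and `α'` are joined by a chain of
adjacent monomials.
-/

theorem Relation.ReflTransGen.exists_fin_chain {α : Type*} {r : α → α → Prop} {a b : α}
    (h : Relation.ReflTransGen r a b) :
    ∃ n : ℕ, ∃ f : Fin (n + 1) → α, f 0 = a ∧ f (Fin.last n) = b ∧
      ∀ i : Fin n, r (f i.castSucc) (f i.succ) := by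
  induction h using Relation.ReflTransGen.head_induction_on with
  | refl => exact ⟨0, fun _ => b, rfl, rfl, Fin.elim0⟩
  | head hac _ ih =>
    obtain ⟨n, f, hf0, hfn, hf⟩ := ih
    refine ⟨n + 1, Fin.cons _ f, rfl, by rw [← Fin.succ_last, Fin.cons_succ, hfn], ?_⟩
    intro i
    cases i using Fin.cases with
    | zero => simpa [hf0] using hac
    | succ j => simpa [← Fin.succ_castSucc] using hf j

section BinomialCongruence

variable {σ : Type*}

def BinomialStep (Q : Set (MvPolynomial σ (ZMod 2))) (t u : Mon σ) : Prop :=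
  ∃ β : Mon σ, ∃ p ∈ Q,
    (monomial t 1 + monomial u 1 : MvPolynomial σ (ZMod 2)) = monomial β 1 * p

namespace BinomialStep

variable {Q : Set (MvPolynomial σ (ZMod 2))}

instance : Std.Symm (BinomialStep Q) :=
  ⟨fun _ _ ⟨β, p, hp, h⟩ => ⟨β, p, hp, by rwa [add_comm]⟩⟩

theorem add_right {t u : Mon σ} (h : BinomialStep Q t u) (v : Mon σ) :
    BinomialStep Q (t + v) (u + v) := by
  obtain ⟨β, p, hp, h⟩ := h
  refine ⟨β + v, p, hp, ?_⟩
  have shift : ∀ s : Mon σ,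
      (monomial (s + v) 1 : MvPolynomial σ (ZMod 2)) = monomial s 1 * monomial v 1 := fun s => by
    rw [monomial_mul, one_mul]
  rw [shift, shift, shift, ← add_mul, h]
  ring

theorem eqvGen_add_right {t u : Mon σ} (h : Relation.EqvGen (BinomialStep Q) t u) (v : Mon σ) :
    Relation.EqvGen (BinomialStep Q) (t + v) (u + v) := by
  induction h with
  | rel _ _ h => exact .rel _ _ (h.add_right v)
  | refl => exact .refl _
  | symm _ _ _ ih => exact .symm _ _ ih
  | trans _ _ _ _ _ ih₁ ih₂ => exact .trans _ _ _ ih₁ ih₂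

end BinomialStep

def binomialCon (Q : Set (MvPolynomial σ (ZMod 2))) : AddCon (Mon σ) where
  toSetoid := Relation.EqvGen.setoid (BinomialStep Q)
  add' {t u v w} htu hvw :=
    .trans _ _ _ (BinomialStep.eqvGen_add_right htu v)
      (by simpa only [add_comm u] using BinomialStep.eqvGen_add_right hvw u)

noncomputable def binomialQuotientHom (Q : Set (MvPolynomial σ (ZMod 2))) :
    MvPolynomial σ (ZMod 2) →+* AddMonoidAlgebra (ZMod 2) (binomialCon Q).Quotient :=
  AddMonoidAlgebra.mapDomainRingHom (ZMod 2) (binomialCon Q).mk'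

theorem binomialQuotientHom_monomial (Q : Set (MvPolynomial σ (ZMod 2))) (t : Mon σ) :
    binomialQuotientHom Q (monomial t 1) =
      AddMonoidAlgebra.single (t : (binomialCon Q).Quotient) 1 := by
  rw [← single_eq_monomial]
  exact AddMonoidAlgebra.mapDomain_single

theorem binomialQuotientHom_binomial_eq_zero_iff {Q : Set (MvPolynomial σ (ZMod 2))}
    {t u : Mon σ} :
    binomialQuotientHom Q (monomial t 1 + monomial u 1) = 0 ↔
      Relation.EqvGen (BinomialStep Q) t u := by
  rw [map_add, binomialQuotientHom_monomial, binomialQuotientHom_monomial,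
    add_eq_zero_iff_eq_neg, ← AddMonoidAlgebra.single_neg, CharTwo.neg_eq,
    AddMonoidAlgebra.single_left_inj one_ne_zero, AddCon.eq]
  rfl

theorem subset_ker_binomialQuotientHom {Q : Set (MvPolynomial σ (ZMod 2))}
    (hQ : ∀ p ∈ Q, ∃ t u : Mon σ, p = monomial t 1 + monomial u 1) :
    Q ⊆ RingHom.ker (binomialQuotientHom Q) := by
  intro p hp
  obtain ⟨t, u, rfl⟩ := hQ p hp
  exact binomialQuotientHom_binomial_eq_zero_iff.mpr
    (.rel _ _ ⟨0, _, hp, by rw [monomial_zero', C_1, one_mul]⟩)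

end BinomialCongruence

/-- If `Q` is a set of binomials (sums of two distinct monomials) and
`α + α' ∈ ⟨Q⟩` for monomials `α, α'`, then there is a chain of monomials
`α = α_0, …, α_r = α'` with `α_i + α_{i+1} = β_i · p_i` for some monomial `β_i` and
`p_i ∈ Q`. -/
theorem stmt9 {σ : Type*} (Q : Set (MvPolynomial σ (ZMod 2)))
    (hQ : ∀ p ∈ Q, ∃ t u : Mon σ, t ≠ u ∧ p = monomial t 1 + monomial u 1)
    (α α' : Mon σ)
    (h : (monomial α 1 + monomial α' 1 : MvPolynomial σ (ZMod 2)) ∈ Ideal.span Q) :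
    ∃ r : ℕ, ∃ a : Fin (r+1) → Mon σ, a 0 = α ∧ a (Fin.last r) = α' ∧
      ∀ i : Fin r, ∃ β : Mon σ, ∃ p ∈ Q,
        (monomial (a i.castSucc) 1 + monomial (a i.succ) 1 : MvPolynomial σ (ZMod 2))
          = monomial β 1 * p := by
  have hQ' : ∀ p ∈ Q, ∃ t u : Mon σ, p = monomial t 1 + monomial u 1 := fun p hp =>
    (hQ p hp).imp fun _ ⟨u, _, hpu⟩ => ⟨u, hpu⟩
  have hker := Ideal.span_le.mpr (subset_ker_binomialQuotientHom hQ') h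
  have hchain : Relation.ReflTransGen (BinomialStep Q) α α' := by
    rw [← Relation.EqvGen.eqvGen_eq_reflTransGen]
    exact binomialQuotientHom_binomial_eq_zero_iff.mp hker
  exact hchain.exists_fin_chain
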